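/- arXiv:1906.03805 — 3 statements merged into one kernel-verified Lean document; each statement's English description precedes it below -/
import Mathlib

section
/- Let V be a finite index set, {w_j}_{j∈V} ⊂ R^d, h ∈ R^d nonzero, i ∈ V, and ε > 0. Then min over perturbations {δ_j}_{j∈V} with ‖δ_j‖ ≤ ε/2 of the softmax probability exp((w_i+δ_i)ᵀh) / Σ_j exp((w_j+δ_j)ᵀh) equals min over a single perturbation δ_i with ‖δ_i‖ ≤ ε of exp((w_i+δ_i)ᵀh) / (exp((w_i+δ_i)ᵀh) + Σ_{j≠i} exp(w_jᵀh)). -/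
open scoped RealInnerProductSpace
open Real Finset

/-!
Against a logit `⟪v, h⟫` a perturbation of norm at most `r` can shift the logit by at most
`r‖h‖`, and `-(r/‖h‖) • h` achieves the shift `-r‖h‖`. Dividing numerator and denominator of
the softmax by `exp (ε‖h‖/2)`, pushing the target logit down by `ε‖h‖/2` and all the others up by
`ε‖h‖/2` has the same effect as pushing the target logit alone down by `ε‖h‖` and leaving the
others in place; so both infima are attained, at the same value.
-/

lemma exp_div_exp_add_le_exp_div_exp_add {t t' S S' : ℝ} (ht : t' ≤ t) (hS : 0 ≤ S)
    (hSS' : S ≤ S') : exp t' / (exp t' + S') ≤ exp t / (exp t + S) := by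
  have hexp : exp t' ≤ exp t := exp_le_exp.2 ht
  rw [div_le_div_iff₀ (add_pos_of_pos_of_nonneg (exp_pos t') (hS.trans hSS')) (by positivity)]
  nlinarith [mul_le_mul_of_nonneg_right hexp hS, mul_le_mul_of_nonneg_left hSS' (exp_pos t).le]

lemma exp_div_sum_exp_eq_shift {V : Type*} [Fintype V] [DecidableEq V] (z : V → ℝ) (i : V)
    (t : ℝ) : exp (z i) / ∑ j, exp (z j) =
      exp (z i - t) / (exp (z i - t) + ∑ j ∈ univ.erase i, exp (z j - t)) := by
  simp only [exp_sub, ← sum_div]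
  rw [← add_div, div_div_div_cancel_right₀ (exp_pos t).ne',
    add_sum_erase _ (fun j => exp (z j)) (mem_univ i)]

section InnerProductSpace

variable {E : Type*} [NormedAddCommGroup E] [InnerProductSpace ℝ E]

lemma abs_inner_le_mul_norm_of_norm_le {δ : E} (h : E) {r : ℝ} (hδ : ‖δ‖ ≤ r) :
    |⟪δ, h⟫| ≤ r * ‖h‖ :=
  (abs_real_inner_le_norm δ h).trans (mul_le_mul_of_nonneg_right hδ (norm_nonneg h))

lemma exists_norm_le_inner_eq_neg_mul_norm (h : E) {r : ℝ} (hr : 0 ≤ r) :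
    ∃ δ : E, ‖δ‖ ≤ r ∧ ⟪δ, h⟫ = -(r * ‖h‖) := by
  rcases eq_or_ne h 0 with rfl | hh
  · exact ⟨0, by simpa using hr, by simp⟩
  have hn : 0 < ‖h‖ := norm_pos_iff.2 hh
  refine ⟨-(r / ‖h‖) • h, ?_, ?_⟩
  · rw [norm_smul, norm_neg, norm_div, norm_norm, Real.norm_of_nonneg hr,
      div_mul_cancel₀ r hn.ne']
  · rw [real_inner_smul_left, real_inner_self_eq_norm_sq]
    field_simp

variable {V : Type*} [Fintype V] [DecidableEq V]

theorem isLeast_softmax_perturb (w : V → E) (h : E) (i : V) {ε : ℝ} (hε : 0 ≤ ε) :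
    IsLeast {x : ℝ | ∃ δ : V → E, (∀ j, ‖δ j‖ ≤ ε / 2) ∧
        x = exp ⟪w i + δ i, h⟫ / ∑ j, exp ⟪w j + δ j, h⟫}
      (exp (⟪w i, h⟫ - ε * ‖h‖) /
        (exp (⟪w i, h⟫ - ε * ‖h‖) + ∑ j ∈ univ.erase i, exp ⟪w j, h⟫)) := by
  constructor
  · obtain ⟨δ, hδ, hδh⟩ := exists_norm_le_inner_eq_neg_mul_norm (r := ε / 2) h (by positivity)
    refine ⟨fun j => if j = i then δ else -δ, fun j => by dsimp only; split_ifs <;> simpa, ?_⟩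
    rw [exp_div_sum_exp_eq_shift (fun j => ⟪w j + if j = i then δ else -δ, h⟫) i (ε / 2 * ‖h‖)]
    have hsum : ∑ j ∈ univ.erase i, exp (⟪w j + if j = i then δ else -δ, h⟫ - ε / 2 * ‖h‖) =
        ∑ j ∈ univ.erase i, exp ⟪w j, h⟫ := by
      refine sum_congr rfl fun j hj => ?_
      rw [if_neg (ne_of_mem_erase hj), inner_add_left, inner_neg_left, hδh]
      ring_nf
    have hi : ⟪w i + δ, h⟫ - ε / 2 * ‖h‖ = ⟪w i, h⟫ - ε * ‖h‖ := by
      rw [inner_add_left, hδh]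
      ring
    simp only [↓reduceIte, hi, hsum]
  · rintro x ⟨δ, hδ, rfl⟩
    rw [exp_div_sum_exp_eq_shift (fun j => ⟪w j + δ j, h⟫) i (ε / 2 * ‖h‖)]
    apply exp_div_exp_add_le_exp_div_exp_add
    · have := (abs_le.1 (abs_inner_le_mul_norm_of_norm_le h (hδ i))).1
      rw [inner_add_left]
      linarith
    · positivity
    · refine sum_le_sum fun j _ => exp_le_exp.2 ?_
      have := (abs_le.1 (abs_inner_le_mul_norm_of_norm_le h (hδ j))).2
      rw [inner_add_left]
      linarith

theorem isLeast_single_perturb (u h : E) {S ε : ℝ} (hS : 0 ≤ S) (hε : 0 ≤ ε) :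
    IsLeast {x : ℝ | ∃ δ : E, ‖δ‖ ≤ ε ∧ x = exp ⟪u + δ, h⟫ / (exp ⟪u + δ, h⟫ + S)}
      (exp (⟪u, h⟫ - ε * ‖h‖) / (exp (⟪u, h⟫ - ε * ‖h‖) + S)) := by
  constructor
  · obtain ⟨δ, hδ, hδh⟩ := exists_norm_le_inner_eq_neg_mul_norm h hε
    exact ⟨δ, hδ, by rw [inner_add_left, hδh, sub_eq_add_neg]⟩
  · rintro x ⟨δ, hδ, rfl⟩
    refine exp_div_exp_add_le_exp_div_exp_add ?_ hS le_rfl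
    have := (abs_le.1 (abs_inner_le_mul_norm_of_norm_le h hδ)).1
    rw [inner_add_left]
    linarith

end InnerProductSpace

theorem adv_softmax_perturb_reduction_general (d : ℕ) (V : Type*) [Fintype V] [DecidableEq V]
    (w : V → EuclideanSpace ℝ (Fin d)) (h : EuclideanSpace ℝ (Fin d))
    (i : V) (ε : ℝ) (hε : 0 < ε) :
    sInf {x : ℝ | ∃ δ : V → EuclideanSpace ℝ (Fin d), (∀ j, ‖δ j‖ ≤ ε / 2) ∧
        x = exp ⟪w i + δ i, h⟫ / ∑ j, exp ⟪w j + δ j, h⟫} =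
    sInf {x : ℝ | ∃ δi : EuclideanSpace ℝ (Fin d), ‖δi‖ ≤ ε ∧
        x = exp ⟪w i + δi, h⟫ /
          (exp ⟪w i + δi, h⟫ + ∑ j ∈ univ.erase i, exp ⟪w j, h⟫)} := by
  rw [(isLeast_softmax_perturb w h i hε.le).csInf_eq,
    (isLeast_single_perturb (w i) h (sum_nonneg fun _ _ => (exp_pos _).le) hε.le).csInf_eq]

theorem adv_softmax_perturb_reduction (d : ℕ) (V : Type*) [Fintype V] [DecidableEq V]
    [Nontrivial V] (w : V → EuclideanSpace ℝ (Fin d)) (h : EuclideanSpace ℝ (Fin d))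
    (hh : h ≠ 0) (i : V) (ε : ℝ) (hε : 0 < ε) :
    sInf {x : ℝ | ∃ δ : V → EuclideanSpace ℝ (Fin d), (∀ j, ‖δ j‖ ≤ ε / 2) ∧
        x = exp ⟪w i + δ i, h⟫ / ∑ j, exp ⟪w j + δ j, h⟫} =
    sInf {x : ℝ | ∃ δi : EuclideanSpace ℝ (Fin d), ‖δi‖ ≤ ε ∧
        x = exp ⟪w i + δi, h⟫ /
          (exp ⟪w i + δi, h⟫ + ∑ j ∈ univ.erase i, exp ⟪w j, h⟫)} :=
  adv_softmax_perturb_reduction_general d V w h i ε hε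
end

section
/- (Energy bound on adversarial softmax) AdvSoft_ε(i, w, h) ≤ σ(Φ(i, w, ‖h‖)), where σ(t) = 1/(1+e^{-t}) is the sigmoid and Φ(i, w, α) = -log Σ_{j≠i} exp(-α(‖w_i - w_j‖ - ε)). -/
open scoped RealInnerProductSpace
open Real Finset

/-! By Cauchy–Schwarz, `⟪w i, h⟫ - ⟪w j, h⟫ ≤ ‖w i - w j‖ * ‖h‖`, so every competitor's softmax
weight `exp ⟪w j, h⟫` dominates `A * exp (-‖h‖ (‖w i - w j‖ - ε))`, where `A` is the adversarial
weight of `i`. Summing over `j ≠ i` gives `A * exp (-Φ) ≤ ∑_{j ≠ i} exp ⟪w j, h⟫`, which is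
`A / (A + ∑_{j ≠ i} exp ⟪w j, h⟫) ≤ 1 / (1 + exp (-Φ))` after clearing denominators. -/

theorem div_add_le_one_div_one_add_of_mul_le {A S T : ℝ} (hA : 0 < A) (hT : 0 ≤ T)
    (hATS : A * T ≤ S) : A / (A + S) ≤ 1 / (1 + T) := by
  have hS : 0 ≤ S := (mul_nonneg hA.le hT).trans hATS
  rw [div_le_div_iff₀ (by positivity) (by positivity)]
  linarith

section InnerProductSpace

variable {E : Type*} [NormedAddCommGroup E] [InnerProductSpace ℝ E]

theorem inner_le_inner_add_norm_sub_mul_norm (x y h : E) :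
    ⟪x, h⟫ ≤ ⟪y, h⟫ + ‖x - y‖ * ‖h‖ := by
  have hxy := real_inner_le_norm (x - y) h
  rw [inner_sub_left] at hxy
  linarith

theorem exp_inner_sub_mul_exp_le (x y h : E) (ε : ℝ) :
    exp (⟪x, h⟫ - ε * ‖h‖) * exp (-(‖h‖ * (‖x - y‖ - ε))) ≤ exp ⟪y, h⟫ := by
  rw [← exp_add, exp_le_exp]
  nlinarith [inner_le_inner_add_norm_sub_mul_norm x y h]

theorem exp_inner_sub_mul_sum_exp_le {ι : Type*} (s : Finset ι) (w : ι → E) (x h : E) (ε : ℝ) :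
    exp (⟪x, h⟫ - ε * ‖h‖) * ∑ j ∈ s, exp (-(‖h‖ * (‖x - w j‖ - ε))) ≤
      ∑ j ∈ s, exp ⟪w j, h⟫ := by
  rw [mul_sum]
  exact sum_le_sum fun j _ => exp_inner_sub_mul_exp_le x (w j) h ε

end InnerProductSpace

theorem advsoft_le_sigmoid_phi_general (d : ℕ) (V : Type*) [Fintype V] [DecidableEq V]
    [Nontrivial V] (w : V → EuclideanSpace ℝ (Fin d)) (h : EuclideanSpace ℝ (Fin d))
    (i : V) (ε : ℝ) :
    exp (⟪w i, h⟫ - ε * ‖h‖) /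
        (exp (⟪w i, h⟫ - ε * ‖h‖) + ∑ j ∈ univ.erase i, exp ⟪w j, h⟫) ≤
      1 / (1 + exp (-(-(log (∑ j ∈ univ.erase i,
        exp (-(‖h‖ * (‖w i - w j‖ - ε)))))))) := by
  obtain ⟨j, hji⟩ := exists_ne i
  have hT : 0 < ∑ j ∈ univ.erase i, exp (-(‖h‖ * (‖w i - w j‖ - ε))) :=
    sum_pos (fun _ _ => exp_pos _) ⟨j, mem_erase.mpr ⟨hji, mem_univ j⟩⟩
  rw [neg_neg, exp_log hT]
  exact div_add_le_one_div_one_add_of_mul_le (exp_pos _) hT.le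
    (exp_inner_sub_mul_sum_exp_le _ w (w i) h ε)

theorem advsoft_le_sigmoid_phi (d : ℕ) (V : Type*) [Fintype V] [DecidableEq V]
    [Nontrivial V] (w : V → EuclideanSpace ℝ (Fin d)) (h : EuclideanSpace ℝ (Fin d))
    (i : V) (ε : ℝ) (hε : 0 ≤ ε) :
    exp (⟪w i, h⟫ - ε * ‖h‖) /
        (exp (⟪w i, h⟫ - ε * ‖h‖) + ∑ j ∈ univ.erase i, exp ⟪w j, h⟫) ≤
      1 / (1 + exp (-(-(log (∑ j ∈ univ.erase i,
        exp (-(‖h‖ * (‖w i - w j‖ - ε)))))))) :=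
  advsoft_le_sigmoid_phi_general d V w h i ε
end

section
/- Suppose AdvSoft_ε(i, w, h) = p with 0 < p < 1 and h ≠ 0. Then min_{j≠i} ‖w_j - w_i‖ ≥ ε + (1/‖h‖)·log(p/(1-p)) whenever p ≥ 1/2. -/
/-!
Writing `a = ⟪w i, h⟫ - ε‖h‖` and `S = ∑_{k ≠ i} exp ⟪w k, h⟫`, we have `p = eᵃ / (eᵃ + S)`, so the
log-odds are `log (p / (1 - p)) = a - log S`. Since `S ≥ exp ⟪w j, h⟫` for every `j ≠ i`, this is at
most `⟪w i - w j, h⟫ - ε‖h‖ ≤ (‖w j - w i‖ - ε) ‖h‖` by Cauchy–Schwarz; divide by `‖h‖ > 0`.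
-/

open scoped RealInnerProductSpace
open Real Finset

theorem log_odds_exp_div_exp_add (x : ℝ) {S : ℝ} (hS : 0 < S) :
    log (exp x / (exp x + S) / (1 - exp x / (exp x + S))) = x - log S := by
  have hden : exp x + S ≠ 0 := by positivity
  have hodds : exp x / (exp x + S) / (1 - exp x / (exp x + S)) = exp x / S := by
    rw [one_sub_div hden, add_sub_cancel_left, div_div_div_cancel_right₀ hden]
  rw [hodds, log_div (exp_pos x).ne' hS.ne', log_exp]

theorem le_log_sum_exp {ι : Type*} {s : Finset ι} (f : ι → ℝ) {j : ι} (hj : j ∈ s) :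
    f j ≤ log (∑ k ∈ s, exp (f k)) := by
  have hle : exp (f j) ≤ ∑ k ∈ s, exp (f k) :=
    single_le_sum (f := fun k => exp (f k)) (fun k _ => (exp_pos _).le) hj
  simpa only [log_exp] using log_le_log (exp_pos _) hle

theorem inner_sub_inner_le_norm_sub_mul_norm {F : Type*} [NormedAddCommGroup F]
    [InnerProductSpace ℝ F] (x y z : F) : ⟪x, z⟫ - ⟪y, z⟫ ≤ ‖y - x‖ * ‖z‖ := by
  rw [← inner_sub_left, norm_sub_rev]
  exact real_inner_le_norm _ _

theorem advsoft_p_separation_bound_general (d : ℕ) (V : Type*) [Fintype V] [DecidableEq V]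
    (w : V → EuclideanSpace ℝ (Fin d)) (h : EuclideanSpace ℝ (Fin d))
    (hh : h ≠ 0) (i : V) (ε p : ℝ)
    (hadv : exp (⟪w i, h⟫ - ε * ‖h‖) /
        (exp (⟪w i, h⟫ - ε * ‖h‖) + ∑ j ∈ univ.erase i, exp ⟪w j, h⟫) = p) :
    ∀ j, j ≠ i → ‖w j - w i‖ ≥ ε + (1 / ‖h‖) * log (p / (1 - p)) := by
  intro j hj
  have hj_mem : j ∈ univ.erase i := mem_erase.2 ⟨hj, mem_univ j⟩
  have hS : 0 < ∑ k ∈ univ.erase i, exp ⟪w k, h⟫ := sum_pos (fun k _ => exp_pos _) ⟨j, hj_mem⟩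
  have hlog_odds : log (p / (1 - p)) =
      ⟪w i, h⟫ - ε * ‖h‖ - log (∑ k ∈ univ.erase i, exp ⟪w k, h⟫) :=
    hadv ▸ log_odds_exp_div_exp_add _ hS
  have hj_le := le_log_sum_exp (fun k => ⟪w k, h⟫) hj_mem
  have hcs := inner_sub_inner_le_norm_sub_mul_norm (w i) (w j) h
  rw [ge_iff_le, ← le_sub_iff_add_le', one_div, inv_mul_le_iff₀ (norm_pos_iff.2 hh)]
  linarith

theorem advsoft_p_separation_bound (d : ℕ) (V : Type*) [Fintype V] [DecidableEq V]
    [Nontrivial V] (w : V → EuclideanSpace ℝ (Fin d)) (h : EuclideanSpace ℝ (Fin d))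
    (hh : h ≠ 0) (i : V) (ε p : ℝ) (hε : 0 ≤ ε) (hp0 : 0 < p) (hp1 : p < 1)
    (hphalf : 1 / 2 ≤ p)
    (hadv : exp (⟪w i, h⟫ - ε * ‖h‖) /
        (exp (⟪w i, h⟫ - ε * ‖h‖) + ∑ j ∈ univ.erase i, exp ⟪w j, h⟫) = p) :
    ∀ j, j ≠ i → ‖w j - w i‖ ≥ ε + (1 / ‖h‖) * log (p / (1 - p)) :=
  advsoft_p_separation_bound_general d V w h hh i ε p hadv
end
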